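/- Let g be an element of the lamplighter group ℤ₂ ≀ ℤ whose lit lamps at non-negative positions are 0 ≤ i₁ < i₂ < … < i_k, whose lit lamps at negative positions are −j_l < … < −j₂ < −j₁ < 0 (so j_l > … > j₁ > 0), and whose lamplighter points at position m (with the convention i_k = 0 if there are no lit lamps at non-negative positions and j_l = 0 if there are none at negative positions). Then the word length of g with respect to the generating set A = {a, t} is d_A(g) = k + l + min{2·i_k + j_l + |m + j_l|, 2·j_l + i_k + |m − i_k|}. -/

import Mathlib

namespace CAG

/-- The convolution `w₁ ⊗ w₂` of two words, over the padded alphabet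
`(Σ ∪ {⋄})²`, modelled as `Option α × Option α` where `none` is the padding symbol `⋄`. -/
def conv {α : Type*} : List α → List α → List (Option α × Option α)
  | [], [] => []
  | a :: as, [] => (some a, none) :: conv as []
  | [], b :: bs => (none, some b) :: conv [] bs
  | a :: as, b :: bs => (some a, some b) :: conv as bs

/-- A binary relation on words is regular if the language of convolutions of its pairs
is a regular language. -/
def IsRegularRel {α : Type*} (R : Set (List α × List α)) : Prop :=
  Language.IsRegular {w | ∃ p ∈ R, w = conv p.1 p.2}

variable {G : Type*} [Group G]

/-- The alphabet `S = A ∪ A⁻¹` associated to a generating set `A ⊆ G`. -/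
def Alph (A : Set G) : Type _ := {x : G // x ∈ A ∪ A⁻¹}

/-- The canonical evaluation map `π : S* → G`. -/
def eval (A : Set G) (w : List (Alph A)) : G := (w.map Subtype.val).prod

/-- The word length `d_A(g)` of `g` with respect to the generating set `A`. -/
noncomputable def wordLength (A : Set G) (g : G) : ℕ :=
  sInf {n | ∃ w : List (Alph A), eval A w = g ∧ w.length = n}

/-- The distance `d_A(g₁, g₂)` in the Cayley graph of `G` with respect to `A`. -/
noncomputable def cayleyDist (A : Set G) (g₁ g₂ : G) : ℕ := wordLength A (g₁⁻¹ * g₂)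

/-- `ψ : L → G` is a Cayley automatic representation of `G` (w.r.t. the
generating set `A`): `L ⊆ S*` is regular, `ψ` is a bijection from `L` onto `G`, and for every
`a ∈ A` the relation `R_a = {(ψ⁻¹(g), ψ⁻¹(g·a)) : g ∈ G}` is regular. -/
def IsCayleyAutomaticRep (A : Set G) (L : Language (Alph A)) (ψ : List (Alph A) → G) : Prop :=
  Language.IsRegular L ∧ Set.BijOn ψ L Set.univ ∧
    ∀ a ∈ A, IsRegularRel {p : List (Alph A) × List (Alph A) |
      p.1 ∈ L ∧ p.2 ∈ L ∧ ψ p.2 = ψ p.1 * a}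

/-- `G` is Cayley automatic with respect to the generating set `A`. -/
def IsCayleyAutomatic (A : Set G) : Prop :=
  ∃ (L : Language (Alph A)) (ψ : List (Alph A) → G), IsCayleyAutomaticRep A L ψ

/-- `G` is automatic (in the sense of Thurston) with respect to the generating set `A`:
there is a regular language `L ⊆ S*` on which the canonical evaluation map `π` is a bijection
onto `G` and all the relations `R_a`, `a ∈ A`, are regular. -/
def IsAutomatic (A : Set G) : Prop :=
  ∃ L : Language (Alph A), IsCayleyAutomaticRep A L (eval A)

/-- The family `𝔉` of non-decreasing, non-negative real valued functions defined on a
final segment `[Q, ∞)` of `ℕ` (values below `Q` are irrelevant junk values). -/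
structure FFun where
  Q : ℕ
  toFun : ℕ → ℝ
  nonneg : ∀ n, Q ≤ n → 0 ≤ toFun n
  mono : ∀ m n, Q ≤ m → m ≤ n → toFun m ≤ toFun n

/-- `h ⪯ f` : there are positive integers `K, M, N`, with `[N,∞)` contained in the domains of
`h` and `f`, such that `h(n) ≤ K·f(M·n)` for all `n ≥ N`. -/
def FFun.Preceq (h f : FFun) : Prop :=
  ∃ K M N : ℕ, 0 < K ∧ 0 < M ∧ 0 < N ∧ h.Q ≤ N ∧ f.Q ≤ N ∧
    ∀ n, N ≤ n → h.toFun n ≤ K * f.toFun (M * n)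

/-- `h ≍ f` iff `h ⪯ f` and `f ⪯ h`. -/
def FFun.Equiv (h f : FFun) : Prop := h.Preceq f ∧ f.Preceq h

/-- `h ≺ f` iff `h ⪯ f` and not `h ≍ f`. -/
def FFun.Prec (h f : FFun) : Prop := h.Preceq f ∧ ¬ h.Equiv f

/-- `G ∈ ℬ_f` with respect to the generating set `A`: there is a Cayley automatic
representation `ψ : L → G` such that the function
`h(n) = max{d_A(π(w), ψ(w)) : w ∈ L, |w| ≤ n}` satisfies `h ⪯ f`
(stated equivalently: for some positive `K, M, N` with `N ≥ Q_f`, every `w ∈ L` with `|w| ≤ n`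
and `n ≥ N` satisfies `d_A(π(w), ψ(w)) ≤ K·f(M·n)`). -/
def InB (A : Set G) (f : FFun) : Prop :=
  ∃ (L : Language (Alph A)) (ψ : List (Alph A) → G),
    IsCayleyAutomaticRep A L ψ ∧
    ∃ K M N : ℕ, 0 < K ∧ 0 < M ∧ 0 < N ∧ f.Q ≤ N ∧
      ∀ n, N ≤ n → ∀ w ∈ L, w.length ≤ n →
        (cayleyDist A (eval A w) (ψ w) : ℝ) ≤ K * f.toFun (M * n)

/-- The identity function `𝔦(n) = n` as an element of `𝔉`. -/
def identF : FFun where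
  Q := 1
  toFun n := n
  nonneg n _ := by positivity
  mono m n _ h := by simpa using (Nat.cast_le (α := ℝ)).mpr h

/-- The exponential function `𝔢(n) = exp n` as an element of `𝔉`. -/
noncomputable def expF : FFun where
  Q := 1
  toFun n := Real.exp n
  nonneg n _ := (Real.exp_pos n).le
  mono m n _ h := Real.exp_le_exp.mpr (by exact_mod_cast h)

end CAG
namespace CAG

/-- Configurations of lamps: finitely supported functions `ℤ → ℤ₂`. -/
abbrev Lamps := ℤ →₀ ZMod 2

/-- Shift of a lamp configuration by `m`. -/
noncomputable def lampShift (m : ℤ) (f : Lamps) : Lamps := Finsupp.mapDomain (· + m) f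

lemma lampShift_zero (f : Lamps) : lampShift 0 f = f := by
  simp only [lampShift, add_zero]
  exact Finsupp.mapDomain_id

lemma lampShift_lampShift (m m' : ℤ) (f : Lamps) :
    lampShift m (lampShift m' f) = lampShift (m' + m) f := by
  rw [lampShift, lampShift, lampShift, ← Finsupp.mapDomain_comp]
  congr 1
  funext x
  simp [add_assoc]

lemma lampShift_add (m : ℤ) (f g : Lamps) :
    lampShift m (f + g) = lampShift m f + lampShift m g :=
  Finsupp.mapDomain_add

/-- The lamplighter group `ℤ₂ ≀ ℤ = (⊕_{i ∈ ℤ} ℤ₂) ⋊ ℤ`: elements are pairs `(f, m)` of a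
finitely supported lamp configuration `f : ℤ → ℤ₂` and the lamplighter position `m ∈ ℤ`,
with `ℤ` acting on the lamp configurations by shift. -/
def Lamplighter := Lamps × ℤ

noncomputable instance : Mul Lamplighter :=
  ⟨fun g h => (g.1 + lampShift g.2 h.1, g.2 + h.2)⟩

instance : One Lamplighter := ⟨((0 : Lamps), (0 : ℤ))⟩

noncomputable instance : Inv Lamplighter := ⟨fun g => (lampShift (-g.2) g.1, -g.2)⟩

lemma Lamplighter.mul_def (g h : Lamplighter) :
    g * h = (g.1 + lampShift g.2 h.1, g.2 + h.2) := rfl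

lemma Lamplighter.one_def : (1 : Lamplighter) = ((0 : Lamps), (0 : ℤ)) := rfl

lemma Lamplighter.inv_def (g : Lamplighter) : g⁻¹ = (lampShift (-g.2) g.1, -g.2) := rfl

noncomputable instance : Group Lamplighter where
  mul_assoc a b c := by
    rw [Lamplighter.mul_def, Lamplighter.mul_def, Lamplighter.mul_def, Lamplighter.mul_def]
    refine Prod.ext ?_ (add_assoc _ _ _)
    show (a.1 + lampShift a.2 b.1) + lampShift (a.2 + b.2) c.1
        = a.1 + lampShift a.2 (b.1 + lampShift b.2 c.1)
    rw [lampShift_add, lampShift_lampShift, add_comm a.2 b.2, add_assoc]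
  one_mul a := by
    rw [Lamplighter.mul_def, Lamplighter.one_def]
    refine Prod.ext ?_ (zero_add _)
    show (0 : Lamps) + lampShift 0 a.1 = a.1
    rw [lampShift_zero, zero_add]
  mul_one a := by
    rw [Lamplighter.mul_def, Lamplighter.one_def]
    refine Prod.ext ?_ (add_zero _)
    show a.1 + lampShift a.2 (0 : Lamps) = a.1
    rw [lampShift, Finsupp.mapDomain_zero, add_zero]
  inv_mul_cancel a := by
    rw [Lamplighter.mul_def, Lamplighter.inv_def, Lamplighter.one_def]
    refine Prod.ext ?_ (neg_add_cancel _)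
    show lampShift (-a.2) a.1 + lampShift (-a.2) a.1 = (0 : Lamps)
    ext i
    have h2 : ∀ x : ZMod 2, x + x = 0 := by decide
    simp [h2]

/-- The generator `a` of the lamplighter group: the lamp at the origin is lit, the
lamplighter points at the origin. -/
noncomputable def Lamplighter.a : Lamplighter := (Finsupp.single 0 1, 0)

/-- The generator `t` of the lamplighter group: all lamps unlit, the lamplighter
points at position `1`. -/
def Lamplighter.t : Lamplighter := ((0 : Lamps), 1)

end CAG

/-!
A word in `a, t^{±1}` spends one letter on each toggle of a lamp and one on each unit step of
the lamplighter. Since a lamp can only be lit while the lamplighter stands at it, the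
lamplighter's walk passes through the extreme lit lamps `i_k` and `-j_l`, in one order or the
other, before it stops at `m`; this gives the lower bound. Sweeping to one extreme, then to the
other and finally to `m`, toggling every lit lamp on the way, gives a word of the same length.
-/

namespace CAG

section WordBall

variable {G : Type*} [Group G] (A : Set G)

def wordBall (n : ℕ) : Set G := {g | ∃ w : List (Alph A), eval A w = g ∧ w.length ≤ n}

variable {A}

lemma mem_wordBall {g : G} {n : ℕ} :
    g ∈ wordBall A n ↔ ∃ w : List (Alph A), eval A w = g ∧ w.length ≤ n := Iff.rfl

lemma eval_append (w w' : List (Alph A)) : eval A (w ++ w') = eval A w * eval A w' :=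
  (congrArg List.prod (List.map_append (f := Subtype.val))).trans List.prod_append

lemma one_mem_wordBall (n : ℕ) : (1 : G) ∈ wordBall A n :=
  mem_wordBall.2 ⟨[], rfl, Nat.zero_le n⟩

lemma mem_wordBall_one {x : G} (hx : x ∈ A ∪ A⁻¹) : x ∈ wordBall A 1 :=
  mem_wordBall.2 ⟨[⟨x, hx⟩], mul_one x, le_rfl⟩

lemma wordBall_mono {m n : ℕ} (h : m ≤ n) : wordBall A m ⊆ wordBall A n := by
  rintro g ⟨w, hw, hlen⟩
  exact ⟨w, hw, hlen.trans h⟩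

lemma mul_mem_wordBall {g h : G} {m n : ℕ} (hg : g ∈ wordBall A m) (hh : h ∈ wordBall A n) :
    g * h ∈ wordBall A (m + n) := by
  obtain ⟨w, rfl, hw⟩ := hg
  obtain ⟨w', rfl, hw'⟩ := hh
  exact ⟨w ++ w', eval_append w w', by rw [List.length_append]; omega⟩

lemma wordLength_le_of_mem_wordBall {g : G} {n : ℕ} (hg : g ∈ wordBall A n) :
    wordLength A g ≤ n := by
  obtain ⟨w, hw, hlen⟩ := hg
  exact (Nat.sInf_le (Set.mem_ofPred.2 ⟨w, hw, rfl⟩)).trans hlen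

lemma exists_eval_eq_length_eq_wordLength {g : G} {n : ℕ} (hg : g ∈ wordBall A n) :
    ∃ w : List (Alph A), eval A w = g ∧ w.length = wordLength A g := by
  obtain ⟨w, hw, -⟩ := hg
  have hne : {n | ∃ w : List (Alph A), eval A w = g ∧ w.length = n}.Nonempty :=
    ⟨w.length, w, hw, rfl⟩
  exact Nat.sInf_mem hne

end WordBall

lemma le_max_unbotD {α : Type*} [LinearOrder α] {s : Finset α} {x : α} (d : α) (hx : x ∈ s) :
    x ≤ s.max.unbotD d := by
  obtain ⟨y, hy⟩ := Finset.max_of_mem hx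
  rw [hy, WithBot.unbotD_coe]
  exact Finset.le_max_of_eq hx hy

lemma max_unbotD_eq_or_mem {α : Type*} [LinearOrder α] (s : Finset α) (d : α) :
    s.max.unbotD d = d ∨ s.max.unbotD d ∈ s := by
  cases h : s.max with
  | bot => exact Or.inl rfl
  | coe y => exact Or.inr (Finset.mem_of_max h)

lemma min_untopD_le {α : Type*} [LinearOrder α] {s : Finset α} {x : α} (d : α) (hx : x ∈ s) :
    s.min.untopD d ≤ x := by
  obtain ⟨y, hy⟩ := Finset.min_of_mem hx
  rw [hy, WithTop.untopD_coe]
  exact Finset.min_le_of_eq hx hy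

lemma min_untopD_eq_or_mem {α : Type*} [LinearOrder α] (s : Finset α) (d : α) :
    s.min.untopD d = d ∨ s.min.untopD d ∈ s := by
  cases h : s.min with
  | top => exact Or.inl rfl
  | coe y => exact Or.inr (Finset.mem_of_min h)

lemma abs_sum_add_abs_sum_add_abs_sum_le (x y z : List ℤ) :
    |x.sum| + |y.sum| + |z.sum| ≤ ((x ++ y ++ z).map abs).sum := by
  have key (l : List ℤ) : |l.sum| ≤ (l.map abs).sum := by
    simpa using Multiset.abs_sum_le_sum_abs (s := (l : Multiset ℤ))
  simp only [List.map_append, List.sum_append]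
  linarith [key x, key y, key z]

/-- A walk through `c ≥ 0` and `b ≤ 0` is at least as long as the shorter of the itineraries
`0 → c → b → end` and `0 → b → c → end`. -/
lemma min_le_sum_abs (s : List ℤ) {u v : ℕ} {c b : ℤ} (hc : 0 ≤ c) (hb : b ≤ 0)
    (hu : (s.take u).sum = c) (hv : (s.take v).sum = b) :
    min (2 * c - b + |s.sum - b|) (c - 2 * b + |s.sum - c|) ≤ (s.map abs).sum := by
  have hsegments {u v : ℕ} (huv : u ≤ v) :
      |(s.take u).sum| + |(s.take v).sum - (s.take u).sum| + |s.sum - (s.take v).sum|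
        ≤ (s.map abs).sum := by
    obtain ⟨k, rfl⟩ := Nat.exists_eq_add_of_le huv
    have h := abs_sum_add_abs_sum_add_abs_sum_le (s.take u) ((s.drop u).take k) (s.drop (u + k))
    rw [← List.take_add, List.take_append_drop] at h
    have e₁ : s.sum = (s.take (u + k)).sum + (s.drop (u + k)).sum := by
      rw [← List.sum_append, List.take_append_drop]
    rw [e₁, List.take_add, List.sum_append]
    ring_nf at h ⊢
    exact h
  rcases le_total u v with huv | hvu
  · have := hsegments huv
    rw [hu, hv, abs_of_nonneg hc, abs_of_nonpos (by omega : b - c ≤ 0)] at this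
    exact (min_le_left _ _).trans (by linarith)
  · have := hsegments hvu
    rw [hu, hv, abs_of_nonpos hb, abs_of_nonneg (by omega : 0 ≤ c - b)] at this
    exact (min_le_right _ _).trans (by linarith)

namespace Lamplighter

open Finsupp

def mk (f : Lamps) (m : ℤ) : Lamplighter := (f, m)

lemma mk_eta (g : Lamplighter) : mk g.1 g.2 = g := rfl

lemma mk_mul_mk (f f' : Lamps) (m m' : ℤ) :
    mk f m * mk f' m' = mk (f + lampShift m f') (m + m') := rfl

lemma fst_mul (g h : Lamplighter) : (g * h).1 = g.1 + lampShift g.2 h.1 := rfl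

lemma snd_mul (g h : Lamplighter) : (g * h).2 = g.2 + h.2 := rfl

@[simp] lemma lampShift_zero_right (m : ℤ) : lampShift m 0 = 0 := mapDomain_zero

lemma card_support_lampShift (m : ℤ) (f : Lamps) :
    (lampShift m f).support.card = f.support.card := by
  rw [lampShift, mapDomain_support_of_injective (add_left_injective m)]
  exact Finset.card_image_of_injective _ (add_left_injective m)

lemma mk_mul_mk_zero (f : Lamps) (m k : ℤ) : mk f m * mk 0 k = mk f (m + k) := by
  rw [mk_mul_mk, lampShift_zero_right, add_zero]

lemma mk_mul_a (f : Lamps) (m : ℤ) : mk f m * a = mk (f + single m 1) m := by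
  rw [show a = mk (single 0 1) 0 from rfl, mk_mul_mk, lampShift, mapDomain_single, zero_add,
    add_zero]

lemma a_inv : a⁻¹ = a := by
  rw [inv_def, show a.2 = 0 from rfl, neg_zero, lampShift_zero]
  rfl

lemma t_inv : t⁻¹ = mk 0 (-1) := by
  rw [inv_def, show t.1 = 0 from rfl, lampShift_zero_right]
  rfl

abbrev gens : Set Lamplighter := {a, t}

lemma eq_of_mem_gens {x : Lamplighter} (hx : x ∈ gens ∪ gens⁻¹) :
    x = a ∨ x = t ∨ x = t⁻¹ := by
  rcases hx with (rfl | rfl) | (h | h)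
  · exact Or.inl rfl
  · exact Or.inr (Or.inl rfl)
  · exact Or.inl (by rw [← inv_inv x, h, a_inv])
  · exact Or.inr (Or.inr (by rw [← inv_inv x, h]))

lemma a_mem_wordBall : a ∈ wordBall gens 1 := mem_wordBall_one (Or.inl (Or.inl rfl))

lemma mk_zero_sign_mem_wordBall {e : ℤ} (he : e ≠ 0) : mk 0 e.sign ∈ wordBall gens 1 := by
  rcases he.lt_or_gt with he | he
  · rw [Int.sign_eq_neg_one_of_neg he, ← t_inv]
    exact mem_wordBall_one (Or.inr (by simp))
  · rw [Int.sign_eq_one_of_pos he]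
    exact mem_wordBall_one (Or.inl (Or.inr rfl))

lemma mk_mem_wordBall_of_erase {f : Lamps} {m : ℤ} {k : ℕ}
    (h : mk (f.erase m) m ∈ wordBall gens ((f.erase m).support.card + k)) :
    mk f m ∈ wordBall gens (f.support.card + k) := by
  by_cases hm : m ∈ f.support
  · have hfm : f m = 1 := by
      have key : ∀ x : ZMod 2, x ≠ 0 → x = 1 := by decide
      exact key _ (mem_support_iff.1 hm)
    have hcard := Finset.card_erase_add_one hm
    rw [← support_erase] at hcard
    have hf : mk f m = mk (f.erase m) m * a := by rw [mk_mul_a, ← hfm, erase_add_single]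
    rw [hf, ← hcard, add_right_comm]
    exact mul_mem_wordBall h a_mem_wordBall
  · rwa [erase_of_notMem_support hm] at h

lemma mk_mem_wordBall_of_support_subset_uIcc (n : ℕ) :
    ∀ (f : Lamps) (e : ℤ), e.natAbs = n → (∀ p ∈ f.support, p ∈ Set.uIcc 0 e) →
      mk f e ∈ wordBall gens (f.support.card + n) := by
  induction n with
  | zero =>
    intro f e he hf
    obtain rfl : e = 0 := Int.natAbs_eq_zero.1 he
    apply mk_mem_wordBall_of_erase
    have h0 : f.erase 0 = 0 := by
      rw [← support_eq_empty, support_erase, Finset.eq_empty_iff_forall_notMem]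
      intro p hp
      obtain ⟨hp0, hp⟩ := Finset.mem_erase.1 hp
      exact hp0 (by simpa using hf p hp)
    rw [h0]
    exact one_mem_wordBall _
  | succ n ih =>
    intro f e he hf
    have he0 : e ≠ 0 := by omega
    apply mk_mem_wordBall_of_erase
    have hstep := mk_mul_mk_zero (f.erase e) (e - e.sign) e.sign
    rw [sub_add_cancel] at hstep
    rw [← hstep, ← add_assoc]
    refine mul_mem_wordBall (ih _ _ ?_ ?_) (mk_zero_sign_mem_wordBall he0)
    · rcases he0.lt_or_gt with h | h
      · rw [Int.sign_eq_neg_one_of_neg h]; omega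
      · rw [Int.sign_eq_one_of_pos h]; omega
    · intro p hp
      rw [support_erase, Finset.mem_erase] at hp
      have := Set.mem_uIcc.1 (hf p hp.2)
      rw [Set.mem_uIcc]
      rcases he0.lt_or_gt with h | h
      · rw [Int.sign_eq_neg_one_of_neg h]; omega
      · rw [Int.sign_eq_one_of_pos h]; omega

lemma mk_zero_mem_wordBall (e : ℤ) : mk 0 e ∈ wordBall gens e.natAbs := by
  simpa using mk_mem_wordBall_of_support_subset_uIcc e.natAbs 0 e rfl (by simp)

/-- Light the lamps of `f₁` on the way to `e₁` and back to `0`, then those of `f₂` on the way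
to `e₂`, and finally walk to `m`. -/
lemma mk_add_mem_wordBall {f₁ f₂ : Lamps} {e₁ e₂ : ℤ} (m : ℤ)
    (h₁ : ∀ p ∈ f₁.support, p ∈ Set.uIcc 0 e₁) (h₂ : ∀ p ∈ f₂.support, p ∈ Set.uIcc 0 e₂) :
    mk (f₁ + f₂) m ∈ wordBall gens
      (f₁.support.card + f₂.support.card + (2 * e₁.natAbs + e₂.natAbs + (m - e₂).natAbs)) := by
  have hg : mk (f₁ + f₂) m = mk f₁ e₁ * mk 0 (-e₁) * mk f₂ e₂ * mk 0 (m - e₂) := by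
    simp only [mk_mul_mk, lampShift_zero_right, add_neg_cancel, lampShift_zero, add_zero]
    congr 1
    ring
  rw [hg]
  refine wordBall_mono ?_ <| mul_mem_wordBall (mul_mem_wordBall (mul_mem_wordBall
    (mk_mem_wordBall_of_support_subset_uIcc _ f₁ e₁ rfl h₁) (mk_zero_mem_wordBall _))
    (mk_mem_wordBall_of_support_subset_uIcc _ f₂ e₂ rfl h₂)) (mk_zero_mem_wordBall _)
  rw [Int.natAbs_neg]
  omega

lemma snd_list_prod (l : List Lamplighter) : l.prod.2 = (l.map fun x => x.2).sum := by
  induction l with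
  | nil => rfl
  | cons x l ih => rw [List.prod_cons, snd_mul, ih, List.map_cons, List.sum_cons]

lemma card_support_fst_list_prod_le (l : List Lamplighter) :
    l.prod.1.support.card ≤ (l.map fun x => x.1.support.card).sum := by
  induction l with
  | nil => simp [one_def]
  | cons x l ih =>
    rw [List.prod_cons, fst_mul, List.map_cons, List.sum_cons]
    calc (x.1 + lampShift x.2 l.prod.1).support.card
        ≤ x.1.support.card + (lampShift x.2 l.prod.1).support.card :=
          (Finset.card_le_card support_add).trans (Finset.card_union_le _ _)
      _ ≤ _ := by rw [card_support_lampShift]; omega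

/-- Every lit lamp was lit by an `a` read while the lamplighter stood at its position. -/
lemma exists_take_prod_snd_eq (l : List Lamplighter) (hl : ∀ x ∈ l, x.1.support ⊆ {0})
    {p : ℤ} (hp : p ∈ l.prod.1.support) : ∃ n, (l.take n).prod.2 = p := by
  induction l generalizing p with
  | nil => simp [one_def] at hp
  | cons x l ih =>
    rw [List.prod_cons, fst_mul] at hp
    rcases Finset.mem_union.1 (support_add hp) with hx | hl'
    · exact ⟨0, (Finset.mem_singleton.1 (hl x List.mem_cons_self hx)).symm⟩
    · obtain ⟨q, hq, rfl⟩ := Finset.mem_image.1 (mapDomain_support hl')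
      obtain ⟨n, hn⟩ := ih (fun y hy => hl y (List.mem_cons_of_mem x hy)) hq
      exact ⟨n + 1, by rw [List.take_succ_cons, List.prod_cons, snd_mul, hn, add_comm]⟩

lemma support_fst_subset_of_mem_gens {x : Lamplighter} (hx : x ∈ gens ∪ gens⁻¹) :
    x.1.support ⊆ {0} := by
  rcases eq_of_mem_gens hx with rfl | rfl | rfl
  · exact support_single_subset
  · simp [show t.1 = 0 from rfl]
  · simp [t_inv, mk]

lemma card_support_fst_add_abs_snd_le_one {x : Lamplighter} (hx : x ∈ gens ∪ gens⁻¹) :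
    (x.1.support.card : ℤ) + |x.2| ≤ 1 := by
  rcases eq_of_mem_gens hx with rfl | rfl | rfl
  · simp [show a = mk (single 0 1) 0 from rfl, mk]
  · simp [show t = mk 0 1 from rfl, mk]
  · simp [t_inv, mk]

lemma card_support_add_min_le_length (w : List (Alph gens)) {c b : ℤ} (hc : 0 ≤ c) (hb : b ≤ 0)
    (hcw : c = 0 ∨ c ∈ (eval gens w).1.support) (hbw : b = 0 ∨ b ∈ (eval gens w).1.support) :
    ((eval gens w).1.support.card : ℤ) +
        min (2 * c - b + |(eval gens w).2 - b|) (c - 2 * b + |(eval gens w).2 - c|) ≤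
      w.length := by
  set l := w.map Subtype.val
  have hgen : ∀ x ∈ l, x ∈ gens ∪ gens⁻¹ := by
    intro x hx
    obtain ⟨y, -, rfl⟩ := List.mem_map.1 hx
    exact y.2
  have hvisit (p : ℤ) (hp : p = 0 ∨ p ∈ l.prod.1.support) :
      ∃ n, ((l.map fun x => x.2).take n).sum = p := by
    rcases hp with rfl | hp
    · exact ⟨0, rfl⟩
    · obtain ⟨n, hn⟩ :=
        exists_take_prod_snd_eq l (fun x hx => support_fst_subset_of_mem_gens (hgen x hx)) hp
      exact ⟨n, by rw [← List.map_take, ← snd_list_prod, hn]⟩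
  obtain ⟨u, hu⟩ := hvisit c hcw
  obtain ⟨v, hv⟩ := hvisit b hbw
  have hwalk := min_le_sum_abs _ hc hb hu hv
  have hlamps : (l.prod.1.support.card : ℤ) ≤ (l.map fun x => (x.1.support.card : ℤ)).sum := by
    have h := Nat.cast_le (α := ℤ) |>.2 (card_support_fst_list_prod_le l)
    rwa [Nat.cast_list_sum, List.map_map] at h
  have hletters : (l.map fun x => (x.1.support.card : ℤ)).sum + (l.map fun x => |x.2|).sum ≤
      l.length := by
    rw [← List.sum_map_add]
    simpa using List.sum_le_sum fun x hx => card_support_fst_add_abs_snd_le_one (hgen x hx)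
  rw [List.map_map, Function.comp_def] at hwalk
  rw [show l.length = w.length from List.length_map _] at hletters
  change (l.prod.1.support.card : ℤ) +
      min (2 * c - b + |l.prod.2 - b|) (c - 2 * b + |l.prod.2 - c|) ≤ w.length
  rw [snd_list_prod]
  linarith

theorem wordLength_mk {f : Lamps} {c b : ℤ} (m : ℤ) (hc : 0 ≤ c) (hb : b ≤ 0)
    (hf : ∀ p ∈ f.support, b ≤ p ∧ p ≤ c) (hcf : c = 0 ∨ c ∈ f.support)
    (hbf : b = 0 ∨ b ∈ f.support) :
    (wordLength gens (mk f m) : ℤ) =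
      f.support.card + min (2 * c - b + |m - b|) (c - 2 * b + |m - c|) := by
  have hsplit := filter_add_filter_not f (0 ≤ ·)
  have hcard := Finset.card_filter_add_card_filter_not (s := f.support) (fun p : ℤ => 0 ≤ p)
  rw [← support_filter, ← support_filter] at hcard
  have h₁ (p : ℤ) (hp : p ∈ (f.filter (0 ≤ ·)).support) : p ∈ Set.uIcc 0 c := by
    rw [support_filter, Finset.mem_filter] at hp
    exact Set.mem_uIcc_of_le hp.2 (hf p hp.1).2
  have h₂ (p : ℤ) (hp : p ∈ (f.filter (¬0 ≤ ·)).support) : p ∈ Set.uIcc 0 b := by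
    rw [support_filter, Finset.mem_filter] at hp
    exact Set.mem_uIcc_of_ge (hf p hp.1).1 (le_of_not_ge hp.2)
  have hup₁ := mk_add_mem_wordBall m h₁ h₂
  have hup₂ := mk_add_mem_wordBall m h₂ h₁
  rw [hsplit] at hup₁
  rw [add_comm (f.filter (¬0 ≤ ·)), hsplit] at hup₂
  obtain ⟨w, hw, hlen⟩ := exists_eval_eq_length_eq_wordLength hup₁
  have hlow := card_support_add_min_le_length w hc hb (hw ▸ hcf) (hw ▸ hbf)
  rw [hw, hlen] at hlow
  refine le_antisymm ?_ hlow
  have hle₁ := Nat.cast_le (α := ℤ) |>.2 (wordLength_le_of_mem_wordBall hup₁)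
  have hle₂ := Nat.cast_le (α := ℤ) |>.2 (wordLength_le_of_mem_wordBall hup₂)
  have hcard' := Nat.cast_inj (R := ℤ) |>.2 hcard
  push_cast [abs_of_nonneg hc, abs_of_nonpos hb] at hle₁ hle₂ hcard'
  rw [← min_add_add_left]
  exact le_min (by linarith) (by linarith)

end Lamplighter

end CAG

open CAG in
/-- Word length formula in the lamplighter group `ℤ₂ ≀ ℤ` with respect to `A = {a, t}`:
for an element `g = (f, m)` whose lit lamps at non-negative positions are
`0 ≤ i₁ < … < i_k` and whose lit lamps at negative positions are `−j_l < … < −j₁ < 0`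
(with `i_k = 0`, resp. `j_l = 0`, if there are no such lit lamps),
`d_A(g) = k + l + min(2·i_k + j_l + |m + j_l|, 2·j_l + i_k + |m − i_k|)`. -/
theorem lamplighter_word_length (g : Lamplighter) :
    let P : Finset ℤ := g.1.support.filter (fun i => 0 ≤ i)
    let N : Finset ℤ := g.1.support.filter (fun i => i < 0)
    let ik : ℤ := P.max.unbotD 0
    let jl : ℤ := -(N.min.untopD 0)
    (wordLength ({Lamplighter.a, Lamplighter.t} : Set Lamplighter) g : ℤ) =
      P.card + N.card +
        min (2 * ik + jl + |g.2 + jl|) (2 * jl + ik + |g.2 - ik|) := by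
  intro P N ik jl
  have hP (p : ℤ) (hp : p ∈ P) : 0 ≤ p ∧ p ≤ ik :=
    ⟨(Finset.mem_filter.1 hp).2, le_max_unbotD 0 hp⟩
  have hN (p : ℤ) (hp : p ∈ N) : -jl ≤ p ∧ p < 0 :=
    ⟨(neg_neg (N.min.untopD 0)).symm ▸ min_untopD_le 0 hp, (Finset.mem_filter.1 hp).2⟩
  have hik : ik = 0 ∨ ik ∈ P := max_unbotD_eq_or_mem P 0
  have hjl : -jl = 0 ∨ -jl ∈ N := (neg_neg (N.min.untopD 0)).symm ▸ min_untopD_eq_or_mem N 0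
  have hik₀ : 0 ≤ ik := hik.elim ge_of_eq fun h => (hP _ h).1
  have hjl₀ : 0 ≤ jl := hjl.elim (fun h => by omega) fun h => by linarith [(hN _ h).2]
  have hcard : P.card + N.card = g.1.support.card := by
    simpa only [not_le] using Finset.card_filter_add_card_filter_not (s := g.1.support) (0 ≤ ·)
  have hf (p : ℤ) (hp : p ∈ g.1.support) : -jl ≤ p ∧ p ≤ ik := by
    rcases le_or_gt 0 p with h | h
    · have := hP p (Finset.mem_filter.2 ⟨hp, h⟩); omega
    · have := hN p (Finset.mem_filter.2 ⟨hp, h⟩); omega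
  have key := Lamplighter.wordLength_mk g.2 hik₀ (neg_nonpos.2 hjl₀) hf
    (hik.imp_right fun h => (Finset.mem_filter.1 h).1)
    (hjl.imp_right fun h => (Finset.mem_filter.1 h).1)
  rw [Lamplighter.mk_eta] at key
  rw [key, ← hcard]
  push_cast
  ring_nf
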